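/- arXiv:2510.09002 — 2 statements merged into one kernel-verified Lean document; each statement's English description precedes it below -/
import Mathlib

section
/- Let G be a connected graph with nonnegative edge lengths whose total edge length is at most h, and let β ≥ 1. Then the vertex set of G can be partitioned into at most O(β) parts such that each part induces a subgraph of (weak) diameter at most h/β, i.e., any two vertices of the same part are at distance at most h/β in that part's induced subgraph. -/
/-!
Let `d` be the shortest-path metric of `(G, l)`, put `ρ = h / (4β)`, and pick a maximal
`2ρ`-separated set `S` of centers; by maximality every vertex lies within `2ρ` of `S`. Cut `V`
into the cells of the nearest center, breaking ties by a fixed enumeration of `V`. A vertex on a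
shortest path from a center `c` to a vertex of its cell again has nearest center `c`, so two
vertices of the cell of `c` are joined inside the cell by a walk of length at most
`2ρ + 2ρ = h / β`.

To count the centers, let each center `c` charge the dart `(x, y)` the amount
`min (l xy) (ρ - d(c, x))⁺`, the length of the part of the dart that the ball `B(c, ρ)` reaches
through `x`. Along a path from `c` to another center, which lies farther than `ρ`, these charges
add up to at least `ρ`. On the other hand, the balls `B(c, ρ)` are pairwise disjoint, so the tail
of a dart lies in at most one of them and the dart pays at most its length in total. Hence
`|S| ρ ≤ 2h`, i.e. `|S| ≤ 8β`.
-/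

open Finset

section NearestCenter

variable {α ι : Type*} [LinearOrder ι] (d : α → α → ℝ) (idx : α → ι) (S : Finset α)

/-- Breaking ties by `idx` makes the nearest center unique and its cell star-shaped along
shortest paths. -/
def IsNearestCenter (c v : α) : Prop :=
  c ∈ S ∧ ∀ c' ∈ S, toLex (d c v, idx c) ≤ toLex (d c' v, idx c')

variable {d idx S} {c c' u v z : α}

lemma exists_isNearestCenter (hS : S.Nonempty) (v : α) : ∃ c, IsNearestCenter d idx S c v := by
  obtain ⟨c, hc, hmin⟩ := S.exists_min_image (fun c ↦ toLex (d c v, idx c)) hS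
  exact ⟨c, hc, hmin⟩

lemma IsNearestCenter.le (h : IsNearestCenter d idx S c v) (hc' : c' ∈ S) : d c v ≤ d c' v := by
  rcases Prod.Lex.le_iff.1 (h.2 c' hc') with h | h
  · exact h.le
  · exact h.1.le

lemma IsNearestCenter.unique (hidx : Function.Injective idx) (h : IsNearestCenter d idx S c v)
    (h' : IsNearestCenter d idx S c' v) : c = c' := by
  have := le_antisymm (h.2 c' h'.1) (h'.2 c h.1)
  exact hidx (congrArg (fun p ↦ (ofLex p).2) this)

lemma IsNearestCenter.of_add_le (htri : ∀ x y z, d x z ≤ d x y + d y z)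
    (h : IsNearestCenter d idx S c u) (hz : d c z + d z u ≤ d c u) :
    IsNearestCenter d idx S c z := by
  refine ⟨h.1, fun c' hc' ↦ not_lt.1 fun hlt ↦ (h.2 c' hc').not_gt ?_⟩
  have hu := htri c' z u
  simp only [Prod.Lex.lt_iff, ofLex_toLex] at hlt ⊢
  rcases hlt with hlt | ⟨heq, hidx⟩
  · exact .inl (by linarith)
  · rcases (show d c' u ≤ d c u by linarith).lt_or_eq with hlt | heq'
    · exact .inl hlt
    · exact .inr ⟨heq', hidx⟩

end NearestCenter

theorem exists_finset_pairwise_lt_and_forall_exists_le {α : Type*} [Finite α]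
    (d : α → α → ℝ) (hd : ∀ a b, d a b = d b a) {r : ℝ} (hr : ∀ a, d a a ≤ r) :
    ∃ S : Finset α, (S : Set α).Pairwise (fun a b ↦ r < d a b) ∧ ∀ v, ∃ c ∈ S, d c v ≤ r := by
  let U : SetRel α α := {p | d p.1 p.2 ≤ r}
  have : U.IsRefl := ⟨hr⟩
  have : U.IsSymm := ⟨fun a b (h : d a b ≤ r) ↦ show d b a ≤ r by rwa [hd]⟩
  obtain ⟨N, -, hN⟩ := Finite.exists_le_maximal
    (p := fun N : Set α ↦ N ⊆ Set.univ ∧ U.IsSeparated N) ⟨Set.empty_subset _, .empty⟩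
  refine ⟨N.toFinite.toFinset, ?_, fun v ↦ ?_⟩
  · simpa [SetRel.IsSeparated, U] using hN.1.2
  · obtain ⟨c, hc, hvc⟩ := SetRel.IsCover.of_maximal_isSeparated hN (Set.mem_univ v)
    exact ⟨c, by simpa using hc, by rw [hd]; exact hvc⟩

theorem Finpartition.card_parts_ofSetoid_ker_le {α β : Type*} [Fintype α] [DecidableEq α]
    [DecidableEq β] (f : α → β) [DecidableRel (Setoid.ker f)] :
    #(ofSetoid (Setoid.ker f)).parts ≤ #(univ.image f) := by
  have : (fun a ↦ ({b ∈ univ | Setoid.ker f a b} : Finset α)) =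
      (fun c ↦ ({b | c = f b} : Finset α)) ∘ f := by
    ext a b; simp [Setoid.ker_def]
  rw [ofSetoid, ofSetSetoid_parts, this, ← image_image]
  exact card_image_le

theorem Finpartition.mem_ofSetoid_ker_iff {α β : Type*} [Fintype α] [DecidableEq α]
    {f : α → β} [DecidableRel (Setoid.ker f)] {p : Finset α}
    (hp : p ∈ (ofSetoid (Setoid.ker f)).parts) {u v : α} (hu : u ∈ p) :
    v ∈ p ↔ f u = f v := by
  rw [← (ofSetoid _).part_eq_of_mem hp hu, mem_part_ofSetoid_iff_rel, Setoid.ker_def]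

namespace SimpleGraph

variable {V : Type*} {G : SimpleGraph V} {l : Sym2 V → ℝ} {u v w : V}

def Walk.weightedLength (l : Sym2 V → ℝ) (p : G.Walk u v) : ℝ := (p.edges.map l).sum

namespace Walk

@[simp] lemma weightedLength_nil : (nil : G.Walk u u).weightedLength l = 0 := rfl

@[simp] lemma weightedLength_cons (h : G.Adj u v) (p : G.Walk v w) :
    (cons h p).weightedLength l = l s(u, v) + p.weightedLength l := by
  simp [weightedLength]

@[simp] lemma weightedLength_append (p : G.Walk u v) (q : G.Walk v w) :
    (p.append q).weightedLength l = p.weightedLength l + q.weightedLength l := by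
  simp [weightedLength]

@[simp] lemma weightedLength_reverse (p : G.Walk u v) :
    p.reverse.weightedLength l = p.weightedLength l := by
  simp [weightedLength, List.sum_reverse]

lemma weightedLength_bypass_le [DecidableEq V] (hl : ∀ e, 0 ≤ l e) (p : G.Walk u v) :
    p.bypass.weightedLength l ≤ p.weightedLength l :=
  (p.edges_bypass_sublist_edges.map l).sum_le_sum (by simp [hl])

end Walk

noncomputable def weightedDist (G : SimpleGraph V) (l : Sym2 V → ℝ) (u v : V) : ℝ :=
  ⨅ p : G.Path u v, (p : G.Walk u v).weightedLength l

lemma weightedDist_le (hl : ∀ e, 0 ≤ l e) (p : G.Walk u v) :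
    G.weightedDist l u v ≤ p.weightedLength l := by
  classical
  have hbdd : BddBelow (Set.range fun q : G.Path u v ↦ (q : G.Walk u v).weightedLength l) :=
    ⟨0, by rintro _ ⟨q, rfl⟩; exact List.sum_nonneg (by simp [hl])⟩
  exact (ciInf_le hbdd p.toPath).trans (p.weightedLength_bypass_le hl)

lemma weightedDist_le_of_adj (hl : ∀ e, 0 ≤ l e) (h : G.Adj u v) :
    G.weightedDist l u v ≤ l s(u, v) := by
  simpa using weightedDist_le hl (.cons h .nil)

lemma Reachable.exists_weightedLength_eq_weightedDist [Finite V] (h : G.Reachable u v) :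
    ∃ p : G.Walk u v, p.weightedLength l = G.weightedDist l u v := by
  classical
  have := Fintype.ofFinite V
  have : Nonempty (G.Path u v) := ⟨h.some.toPath⟩
  obtain ⟨p, hp⟩ :=
    exists_eq_ciInf_of_finite (f := fun p : G.Path u v ↦ (p : G.Walk u v).weightedLength l)
  exact ⟨p, hp⟩

@[simp] lemma weightedDist_self : G.weightedDist l v v = 0 := by
  simp [weightedDist, Path.loop_eq]

lemma weightedDist_comm : G.weightedDist l u v = G.weightedDist l v u := by
  let e : G.Path u v ≃ G.Path v u :=
    ⟨Path.reverse, Path.reverse, fun p ↦ by ext; simp, fun p ↦ by ext; simp⟩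
  exact e.iInf_congr fun p ↦ by simp [e]

lemma weightedDist_triangle [Finite V] (hl : ∀ e, 0 ≤ l e) (hG : G.Connected) (u v w : V) :
    G.weightedDist l u w ≤ G.weightedDist l u v + G.weightedDist l v w := by
  obtain ⟨p, hp⟩ := (hG.preconnected u v).exists_weightedLength_eq_weightedDist (l := l)
  obtain ⟨q, hq⟩ := (hG.preconnected v w).exists_weightedLength_eq_weightedDist (l := l)
  simpa [hp, hq] using weightedDist_le hl (p.append q)

lemma weightedDist_add_weightedDist_le_of_mem_support (hl : ∀ e, 0 ≤ l e) (p : G.Walk u w)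
    (hv : v ∈ p.support) :
    G.weightedDist l u v + G.weightedDist l v w ≤ p.weightedLength l := by
  classical
  conv_rhs => rw [← p.take_spec hv]
  rw [Walk.weightedLength_append]
  exact add_le_add (weightedDist_le hl _) (weightedDist_le hl _)

lemma sum_dart_edge [Fintype V] [DecidableEq V] [DecidableRel G.Adj] {M : Type*}
    [AddCommMonoid M] (f : Sym2 V → M) :
    ∑ d : G.Dart, f d.edge = 2 • ∑ e ∈ G.edgeFinset, f e := by
  rw [← sum_fiberwise_of_maps_to (g := Dart.edge) (t := G.edgeFinset) (by simp), smul_sum]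
  refine sum_congr rfl fun e he ↦ ?_
  rw [sum_congr rfl fun d hd ↦ by rw [(mem_filter.1 hd).2], sum_const,
    G.dart_edge_fiber_card e (mem_edgeFinset.1 he)]

noncomputable def dartCharge (G : SimpleGraph V) (l : Sym2 V → ℝ) (ρ : ℝ) (c : V)
    (d : G.Dart) : ℝ :=
  min (l d.edge) (max 0 (ρ - G.weightedDist l c d.fst))

lemma dartCharge_nonneg (hl : ∀ e, 0 ≤ l e) (ρ : ℝ) (c : V) (d : G.Dart) :
    0 ≤ G.dartCharge l ρ c d :=
  le_min (hl _) (le_max_left _ _)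

lemma sub_le_dartCharge [Finite V] (hl : ∀ e, 0 ≤ l e) (hG : G.Connected) (ρ : ℝ) (c : V)
    (d : G.Dart) :
    min (G.weightedDist l c d.snd) ρ - min (G.weightedDist l c d.fst) ρ ≤
      G.dartCharge l ρ c d := by
  have := (weightedDist_triangle hl hG c d.fst d.snd).trans
    (add_le_add_right (weightedDist_le_of_adj hl d.adj) _)
  have := hl d.edge
  simp only [dartCharge, Dart.edge, min_def, max_def] at *
  split_ifs <;> linarith

lemma sub_le_sum_dartCharge [Finite V] (hl : ∀ e, 0 ≤ l e) (hG : G.Connected) (ρ : ℝ) (c : V)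
    (p : G.Walk u v) :
    min (G.weightedDist l c v) ρ - min (G.weightedDist l c u) ρ ≤
      (p.darts.map (G.dartCharge l ρ c)).sum := by
  induction p with
  | nil => simp
  | cons h p ih =>
    have := sub_le_dartCharge hl hG ρ c ⟨(_, _), h⟩
    simp only [Walk.darts_cons, List.map_cons, List.sum_cons]
    linarith

lemma le_sum_dartCharge [Fintype V] [DecidableEq V] [DecidableRel G.Adj] (hl : ∀ e, 0 ≤ l e)
    (hG : G.Connected) {ρ : ℝ} (hρ : 0 ≤ ρ) {c v : V} (hv : ρ ≤ G.weightedDist l c v) :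
    ρ ≤ ∑ d : G.Dart, G.dartCharge l ρ c d := by
  let p := (hG.preconnected c v).some.toPath
  have hnodup : (p : G.Walk c v).darts.Nodup :=
    Walk.darts_nodup_of_support_nodup p.2.support_nodup
  calc ρ = min (G.weightedDist l c v) ρ - min (G.weightedDist l c c) ρ := by simp [hv, hρ]
    _ ≤ ((p : G.Walk c v).darts.map (G.dartCharge l ρ c)).sum :=
      sub_le_sum_dartCharge hl hG ρ c _
    _ = ∑ d ∈ (p : G.Walk c v).darts.toFinset, G.dartCharge l ρ c d :=
      (List.sum_toFinset _ hnodup).symm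
    _ ≤ ∑ d : G.Dart, G.dartCharge l ρ c d :=
      sum_le_univ_sum_of_nonneg (dartCharge_nonneg hl ρ c)

lemma sum_dartCharge_le [Finite V] (hl : ∀ e, 0 ≤ l e) (hG : G.Connected) {ρ : ℝ} {S : Finset V}
    (hS : (S : Set V).Pairwise fun a b ↦ 2 * ρ < G.weightedDist l a b) (d : G.Dart) :
    ∑ c ∈ S, G.dartCharge l ρ c d ≤ l d.edge := by
  have hfar (c : V) (hc : ρ ≤ G.weightedDist l c d.fst) : G.dartCharge l ρ c d = 0 := by
    rw [dartCharge, max_eq_left (by linarith), min_eq_right (hl _)]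
  by_cases hnear : ∃ c₀ ∈ S, G.weightedDist l c₀ d.fst < ρ
  · obtain ⟨c₀, hc₀, hc₀d⟩ := hnear
    rw [sum_eq_single_of_mem c₀ hc₀ fun c hc hne ↦ hfar c <| not_lt.1 fun hcd ↦ ?_]
    · exact min_le_left _ _
    · have := weightedDist_triangle hl hG c₀ d.fst c
      have := hS hc₀ hc hne.symm
      rw [weightedDist_comm (u := d.fst)] at *
      linarith
  · push Not at hnear
    rw [sum_eq_zero fun c hc ↦ hfar c (hnear c hc)]
    exact hl _

theorem card_mul_le_of_pairwise_lt_weightedDist [Fintype V] [DecidableEq V] [DecidableRel G.Adj]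
    (hl : ∀ e, 0 ≤ l e) (hG : G.Connected) {ρ : ℝ} (hρ : 0 ≤ ρ) {S : Finset V}
    (hS : (S : Set V).Pairwise fun a b ↦ 2 * ρ < G.weightedDist l a b) (hS₂ : 1 < #S) :
    #S * ρ ≤ 2 * ∑ e ∈ G.edgeFinset, l e := by
  have hcharge (c) (hc : c ∈ S) : ρ ≤ ∑ d : G.Dart, G.dartCharge l ρ c d := by
    obtain ⟨c', hc', hne⟩ := exists_mem_ne hS₂ c
    exact le_sum_dartCharge hl hG hρ (by linarith [hS hc hc' hne.symm])
  calc #S * ρ = ∑ c ∈ S, ρ := by simp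
    _ ≤ ∑ c ∈ S, ∑ d : G.Dart, G.dartCharge l ρ c d := sum_le_sum hcharge
    _ = ∑ d : G.Dart, ∑ c ∈ S, G.dartCharge l ρ c d := sum_comm
    _ ≤ ∑ d : G.Dart, l d.edge := sum_le_sum fun d _ ↦ sum_dartCharge_le hl hG hS d
    _ = 2 * ∑ e ∈ G.edgeFinset, l e := by rw [sum_dart_edge, two_smul, two_mul]

lemma exists_walk_forall_isNearestCenter [Finite V] {ι : Type*} [LinearOrder ι] {idx : V → ι}
    {S : Finset V} (hl : ∀ e, 0 ≤ l e) (hG : G.Connected) {c : V}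
    (hu : IsNearestCenter (G.weightedDist l) idx S c u)
    (hv : IsNearestCenter (G.weightedDist l) idx S c v) :
    ∃ p : G.Walk u v, (∀ z ∈ p.support, IsNearestCenter (G.weightedDist l) idx S c z) ∧
      p.weightedLength l = G.weightedDist l c u + G.weightedDist l c v := by
  have geodesic {x} (hx : IsNearestCenter (G.weightedDist l) idx S c x) :
      ∃ p : G.Walk c x, p.weightedLength l = G.weightedDist l c x ∧
        ∀ z ∈ p.support, IsNearestCenter (G.weightedDist l) idx S c z := by
    obtain ⟨p, hp⟩ := (hG.preconnected c x).exists_weightedLength_eq_weightedDist (l := l)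
    exact ⟨p, hp, fun z hz ↦ hx.of_add_le (weightedDist_triangle hl hG)
      ((weightedDist_add_weightedDist_le_of_mem_support hl p hz).trans hp.le)⟩
  obtain ⟨p, hp, hpc⟩ := geodesic hu
  obtain ⟨q, hq, hqc⟩ := geodesic hv
  refine ⟨p.reverse.append q, fun z hz ↦ ?_, by simp [hp, hq]⟩
  rcases (Walk.mem_support_append_iff _ _).1 hz with hz | hz
  · exact hpc z (by simpa using hz)
  · exact hqc z hz

end SimpleGraph

open SimpleGraph

/-- A connected graph with nonnegative edge lengths of total length at most `h`
admits a partition of its vertices into at most `8β` parts, each of which induces a subgraph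
of weak diameter at most `h/β`: any two vertices of the same part are joined by a walk
staying inside the part of total length at most `h/β`. -/
theorem stmt3 {V : Type*} [Fintype V] [DecidableEq V]
    (G : SimpleGraph V) [DecidableRel G.Adj] (hG : G.Connected)
    (l : Sym2 V → ℝ) (hl : ∀ e, 0 ≤ l e)
    (h β : ℝ) (hh : 0 < h) (hβ : 1 ≤ β)
    (hsum : ∑ e ∈ G.edgeFinset, l e ≤ h) :
    ∃ P : Finpartition (Finset.univ : Finset V),
      (P.parts.card : ℝ) ≤ 8 * β ∧
      ∀ part ∈ P.parts, ∀ u ∈ part, ∀ v ∈ part,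
        ∃ p : G.Walk u v, (∀ x ∈ p.support, x ∈ part) ∧
          (p.edges.map l).sum ≤ h / β := by
  classical
  have hβ₀ : 0 < β := by linarith
  set ρ := h / (4 * β)
  obtain ⟨S, hSsep, hScov⟩ := exists_finset_pairwise_lt_and_forall_exists_le (G.weightedDist l)
    (fun _ _ ↦ weightedDist_comm) (r := 2 * ρ) (fun _ ↦ by rw [weightedDist_self]; positivity)
  choose φ hφ using fun v ↦ exists_isNearestCenter (d := G.weightedDist l)
    (idx := Fintype.equivFin V) (let ⟨c, hc, _⟩ := hScov v; ⟨c, hc⟩) v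
  have hφρ (v) : G.weightedDist l (φ v) v ≤ 2 * ρ :=
    let ⟨c, hc, hcv⟩ := hScov v; ((hφ v).le hc).trans hcv
  refine ⟨Finpartition.ofSetoid (Setoid.ker φ), ?_, fun part hpart u hu v hv ↦ ?_⟩
  · have hcard := (Finpartition.card_parts_ofSetoid_ker_le φ).trans
      (card_le_card (image_subset_iff.2 fun v _ ↦ (hφ v).1))
    refine le_trans (Nat.cast_le.2 hcard) ?_
    rcases le_or_gt #S 1 with hS₁ | hS₁
    · linarith [show (#S : ℝ) ≤ 1 by exact_mod_cast hS₁]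
    · have := card_mul_le_of_pairwise_lt_weightedDist hl hG (by positivity) hSsep hS₁
      rw [mul_div_assoc', div_le_iff₀ (by positivity)] at this
      nlinarith
  · have hmem (z : V) : z ∈ part ↔ φ u = φ z := Finpartition.mem_ofSetoid_ker_iff hpart hu
    have huv := (hmem v).1 hv
    obtain ⟨p, hpφ, hp⟩ := exists_walk_forall_isNearestCenter hl hG (hφ u) (huv ▸ hφ v)
    refine ⟨p, fun z hz ↦ (hmem z).2
      ((hφ z).unique (Fintype.equivFin V).injective (hpφ z hz)).symm, ?_⟩
    have h4ρ : 4 * ρ = h / β := by simp only [ρ]; field_simp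
    change p.weightedLength l ≤ h / β
    linarith [hφρ u, huv ▸ hφρ v]
end

section
/- The group Steiner tree to length-constrained MST reduction is exact: given a group Steiner instance on graph F with root r and disjoint groups g_1,…,g_k, construct G by (a) attaching to each group vertex v a copy v′ via a length-h weight-0 edge, (b) adding weight-0 length-0 clique edges among all copies of the same group, (c) adding a length-h weight-0 edge from r to every original vertex, (d) keeping each edge of F with its original weight and length 0. Then a spanning tree of G in which every vertex is at distance at most h from r yields, by intersecting with E(F), a subgraph of F connecting r to at least one vertex of every group with the same weight; and conversely every group Steiner solution extends to a feasible h-length spanning tree of G of the same weight. -/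
open SimpleGraph

/-- Edges of the graph `G` constructed in the reduction from group Steiner tree on `F`:
`fe e` is an original edge of `F` (weight kept, length 0), `pull v` is the length-`h`
weight-0 edge from a group vertex `v` to its copy, `clique a b` is a length-0 weight-0
edge between two copies of vertices of the same group, and `span v` is the length-`h`
weight-0 edge from the root to an original vertex `v ≠ r`. -/
inductive RedEdge (V : Type*) where
  | fe (e : Sym2 V)
  | pull (v : V)
  | clique (a b : V)
  | span (v : V)

/-- `v` belongs to some group. -/
def InGroup {V : Type*} {k : ℕ} (g : Fin k → Finset V) (v : V) : Prop := ∃ i, v ∈ g i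

instance {V : Type*} {k : ℕ} [DecidableEq V] (g : Fin k → Finset V) :
    DecidablePred (InGroup g) := fun _ => by unfold InGroup; infer_instance

/-- Vertices of the constructed graph: the original vertices plus a copy of each group
vertex. -/
abbrev RedVert {V : Type*} {k : ℕ} (g : Fin k → Finset V) := V ⊕ {v : V // InGroup g v}

/-- Incidence of the multigraph edges of the constructed graph: `RedStep F r g e x y`
says the edge `e` joins the vertices `x` and `y`. -/
def RedStep {V : Type*} {k : ℕ} (F : SimpleGraph V) (r : V) (g : Fin k → Finset V) :
    RedEdge V → RedVert g → RedVert g → Prop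
  | RedEdge.fe e, x, y => ∃ u v, F.Adj u v ∧ e = s(u, v) ∧ x = Sum.inl u ∧ y = Sum.inl v
  | RedEdge.pull v, x, y => ∃ hv : InGroup g v,
      (x = Sum.inl v ∧ y = Sum.inr ⟨v, hv⟩) ∨ (x = Sum.inr ⟨v, hv⟩ ∧ y = Sum.inl v)
  | RedEdge.clique a b, x, y => a ≠ b ∧ (∃ i, a ∈ g i ∧ b ∈ g i) ∧
      ∃ (ha : InGroup g a) (hb : InGroup g b),
        (x = Sum.inr ⟨a, ha⟩ ∧ y = Sum.inr ⟨b, hb⟩) ∨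
        (x = Sum.inr ⟨b, hb⟩ ∧ y = Sum.inr ⟨a, ha⟩)
  | RedEdge.span v, x, y => v ≠ r ∧
      ((x = Sum.inl r ∧ y = Sum.inl v) ∨ (x = Sum.inl v ∧ y = Sum.inl r))

/-- Edge lengths of the constructed graph. -/
def redLen {V : Type*} (h : ℝ) : RedEdge V → ℝ
  | RedEdge.fe _ => 0
  | RedEdge.pull _ => h
  | RedEdge.clique _ _ => 0
  | RedEdge.span _ => h

/-- Edge weights of the constructed graph. -/
def redWt {V : Type*} (wF : Sym2 V → ℝ) : RedEdge V → ℝ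
  | RedEdge.fe e => wF e
  | RedEdge.pull _ => 0
  | RedEdge.clique _ _ => 0
  | RedEdge.span _ => 0

/-- Walks in the constructed multigraph using only edges of `T`, recorded as the list of
traversed edges. -/
inductive RedWalk {V : Type*} {k : ℕ} (F : SimpleGraph V) (r : V) (g : Fin k → Finset V)
    (T : Finset (RedEdge V)) : RedVert g → RedVert g → List (RedEdge V) → Prop
  | nil (x : RedVert g) : RedWalk F r g T x x []
  | cons {x z y : RedVert g} {e : RedEdge V} {es : List (RedEdge V)} :
      e ∈ T → RedStep F r g e x z → RedWalk F r g T z y es →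
      RedWalk F r g T x y (e :: es)

/-! In a feasible spanning tree `T` of `G` every copy `v′` is reached from `r` within length `h`,
so its root path uses exactly one length-`h` edge. Length-0 edges neither leave the original
vertices nor the copies of one group, so that edge is the pull edge of a vertex `u` in the group
of `v`, and before it the path runs through edges of `F`: it joins `r` to `u` inside `T ∩ E(F)`.
That the `F`-edges listed in `T` are genuine edges of `F` uses `|T| = |V(G)| - 1`: the last
edges of shortest root paths are pairwise distinct, hence exhaust `T`.

Conversely, a forest `S` solving the group Steiner instance is completed by one span edge per
component of `S` not containing `r`, the pull edge of a representative of each group joined to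
`r` in `S`, and clique edges from that representative's copy to the other copies of its group;
all added edges have weight 0. -/

open Finset Function

theorem SimpleGraph.Walk.mem_of_mem_edges_fromEdgeSet {V : Type*} {s : Set (Sym2 V)} {a b : V}
    (p : (fromEdgeSet s).Walk a b) {e : Sym2 V} (he : e ∈ p.edges) : e ∈ s := by
  have := p.edges_subset_edgeSet he
  rw [edgeSet_fromEdgeSet] at this
  exact this.1

section Forest

variable {V : Type*} [DecidableEq V]

theorem exists_roots_sup_edge {G : SimpleGraph V} {R : Finset V} {r : V} (hrR : r ∈ R)
    (hcover : ∀ v, ∃ w ∈ R, G.Reachable w v) {a b : V} (hab : a ≠ b) (hnreach : ¬G.Reachable a b) :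
    ∃ R' : Finset V, r ∈ R' ∧ #R' + 1 = #R ∧ ∀ v, ∃ w ∈ R', (G ⊔ edge a b).Reachable w v := by
  obtain ⟨wa, hwa, hra⟩ := hcover a
  obtain ⟨wb, hwb, hrb⟩ := hcover b
  have hne : wa ≠ wb := by
    rintro rfl
    exact hnreach (hra.symm.trans hrb)
  have hjoin : (G ⊔ edge a b).Reachable wa wb :=
    (hra.mono le_sup_left).trans <|
      (Adj.reachable (Or.inr (by simp [edge_adj, hab]))).trans (hrb.symm.mono le_sup_left)
  -- the new edge merges the components of `wa` and `wb`; drop whichever root is not `r`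
  obtain ⟨w, w', hw, hw', hww', hwr, hreach⟩ : ∃ w w', w ∈ R ∧ w' ∈ R ∧ w ≠ w' ∧ w ≠ r ∧
      (G ⊔ edge a b).Reachable w' w := by
    by_cases hwar : wa = r
    · exact ⟨wb, wa, hwb, hwa, hne.symm, fun h => hne (hwar.trans h.symm), hjoin⟩
    · exact ⟨wa, wb, hwa, hwb, hne, hwar, hjoin.symm⟩
  refine ⟨R.erase w, mem_erase.mpr ⟨hwr.symm, hrR⟩, card_erase_add_one hw, fun v => ?_⟩
  obtain ⟨u, hu, huv⟩ := hcover v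
  by_cases huw : u = w
  · exact ⟨w', mem_erase.mpr ⟨hww'.symm, hw'⟩, hreach.trans (huw ▸ huv.mono le_sup_left)⟩
  · exact ⟨u, mem_erase.mpr ⟨huw, hu⟩, huv.mono le_sup_left⟩

/-- `R` holds one root per component of the forest. -/
theorem exists_roots_of_isAcyclic [Fintype V] (r : V) (S : Finset (Sym2 V))
    (hS : ∀ e ∈ S, ¬e.IsDiag) (hac : (fromEdgeSet (S : Set (Sym2 V))).IsAcyclic) :
    ∃ R : Finset V, r ∈ R ∧ #R + #S = Fintype.card V ∧
      ∀ v, ∃ w ∈ R, (fromEdgeSet (S : Set (Sym2 V))).Reachable w v := by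
  induction S using Finset.induction_on with
  | empty => exact ⟨univ, mem_univ r, by simp, fun v => ⟨v, mem_univ v, .refl v⟩⟩
  | @insert e S heS ih =>
    rcases e with ⟨a, b⟩
    have hab : a ≠ b := fun h => hS _ (mem_insert_self _ _) (by simp [h])
    have hG : fromEdgeSet (↑(insert s(a, b) S) : Set (Sym2 V)) =
        fromEdgeSet (S : Set (Sym2 V)) ⊔ edge a b := by
      rw [coe_insert, Set.insert_eq, fromEdgeSet_union, sup_comm]
      rfl
    rw [hG] at hac ⊢
    obtain ⟨R, hrR, hcard, hcover⟩ :=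
      ih (fun e he => hS e (mem_insert_of_mem he)) (hac.anti le_sup_left)
    have hnreach : ¬(fromEdgeSet (S : Set (Sym2 V))).Reachable a b := fun hr => by
      rcases (isAcyclic_sup_fromEdgeSet_iff.mp hac).2 hr with h | h
      · exact hab h
      · exact heS ((fromEdgeSet_adj _).mp h).1
    obtain ⟨R', hrR', hcard', hcover'⟩ := exists_roots_sup_edge hrR hcover hab hnreach
    refine ⟨R', hrR', ?_, hcover'⟩
    rw [card_insert_of_notMem heS]
    omega

end Forest

section Reduction

variable {V : Type*} {k : ℕ} {F : SimpleGraph V} {r : V} {g : Fin k → Finset V}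
  {T : Finset (RedEdge V)}

namespace RedWalk

theorem eq_of_nil {x y : RedVert g} (hw : RedWalk F r g T x y []) : x = y := by
  cases hw
  rfl

theorem append {x y z : RedVert g} {L₁ L₂ : List (RedEdge V)} (h₁ : RedWalk F r g T x y L₁)
    (h₂ : RedWalk F r g T y z L₂) : RedWalk F r g T x z (L₁ ++ L₂) := by
  induction h₁ with
  | nil => exact h₂
  | cons he hs _ ih => exact .cons he hs (ih h₂)

theorem exists_eq_concat {x y : RedVert g} {L : List (RedEdge V)} (hw : RedWalk F r g T x y L)
    (hL : L ≠ []) :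
    ∃ z e L', L = L' ++ [e] ∧ RedWalk F r g T x z L' ∧ e ∈ T ∧ RedStep F r g e z y := by
  induction hw with
  | nil => exact absurd rfl hL
  | @cons x z y e es he hs hrest ih =>
    rcases es with _ | ⟨e', es⟩
    · cases hrest.eq_of_nil
      exact ⟨x, e, [], rfl, .nil x, he, hs⟩
    · obtain ⟨z', e'', L', heq, hw', he'', hs''⟩ := ih (List.cons_ne_nil _ _)
      exact ⟨z', e'', e :: L', by rw [heq]; rfl, .cons he hs hw', he'', hs''⟩

theorem ofWalk {G : SimpleGraph V} (hGF : G ≤ F) {a b : V} (p : G.Walk a b)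
    (hp : ∀ e ∈ p.edges, RedEdge.fe e ∈ T) :
    RedWalk F r g T (.inl a) (.inl b) (p.edges.map .fe) := by
  induction p with
  | nil => exact .nil _
  | cons hadj p ih =>
    exact .cons (hp _ (by simp)) ⟨_, _, hGF hadj, rfl, rfl, rfl⟩
      (ih fun e he => hp e (by simp [he]))

end RedWalk

theorem RedStep.eq_or_swap {e : RedEdge V} {x y x' y' : RedVert g}
    (h₁ : RedStep F r g e x y) (h₂ : RedStep F r g e x' y') :
    (x' = x ∧ y' = y) ∨ (x' = y ∧ y' = x) := by
  cases e with
  | fe e =>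
    obtain ⟨u, v, -, rfl, rfl, rfl⟩ := h₁
    obtain ⟨u', v', -, he, rfl, rfl⟩ := h₂
    rcases Sym2.eq_iff.mp he with ⟨rfl, rfl⟩ | ⟨rfl, rfl⟩ <;> simp
  | pull v =>
    obtain ⟨-, ⟨rfl, rfl⟩ | ⟨rfl, rfl⟩⟩ := h₁ <;>
      obtain ⟨-, ⟨rfl, rfl⟩ | ⟨rfl, rfl⟩⟩ := h₂ <;> simp
  | clique a b =>
    obtain ⟨-, -, -, -, ⟨rfl, rfl⟩ | ⟨rfl, rfl⟩⟩ := h₁ <;>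
      obtain ⟨-, -, -, -, ⟨rfl, rfl⟩ | ⟨rfl, rfl⟩⟩ := h₂ <;> simp
  | span v =>
    obtain ⟨-, ⟨rfl, rfl⟩ | ⟨rfl, rfl⟩⟩ := h₁ <;>
      obtain ⟨-, ⟨rfl, rfl⟩ | ⟨rfl, rfl⟩⟩ := h₂ <;> simp

theorem redLen_nonneg {h : ℝ} (hh : 0 ≤ h) (e : RedEdge V) : 0 ≤ redLen h e := by
  cases e <;> simp [redLen, hh]

@[simp]
theorem redLen_comp_fe (h : ℝ) : redLen h ∘ RedEdge.fe = fun _ : Sym2 V => 0 :=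
  rfl

theorem sum_redLen_nonneg {h : ℝ} (hh : 0 ≤ h) (L : List (RedEdge V)) :
    0 ≤ (L.map (redLen h)).sum :=
  List.sum_nonneg (by simpa using fun e _ => redLen_nonneg hh e)

noncomputable def groupIdx (g : Fin k → Finset V) (v : {v // InGroup g v}) : Fin k :=
  v.2.choose

theorem mem_groupIdx (v : {v // InGroup g v}) : v.1 ∈ g (groupIdx g v) :=
  v.2.choose_spec

theorem groupIdx_eq (hdisj : Pairwise (Disjoint on g)) {v : {v // InGroup g v}} {i : Fin k}
    (hv : v.1 ∈ g i) : groupIdx g v = i := by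
  by_contra hne
  exact disjoint_left.mp (hdisj hne) (mem_groupIdx v) hv

noncomputable def copyGroup (g : Fin k → Finset V) : RedVert g → Option (Fin k)
  | .inl _ => none
  | .inr v => some (groupIdx g v)

theorem RedStep.copyGroup_eq (hdisj : Pairwise (Disjoint on g)) {h : ℝ} (hh : 0 < h)
    {e : RedEdge V} {x y : RedVert g} (hs : RedStep F r g e x y) (he : redLen h e ≤ 0) :
    copyGroup g x = copyGroup g y := by
  cases e with
  | fe _ =>
    obtain ⟨u, v, -, -, rfl, rfl⟩ := hs
    rfl
  | clique a b =>
    obtain ⟨-, ⟨i, ha, hb⟩, ha', hb', ⟨rfl, rfl⟩ | ⟨rfl, rfl⟩⟩ := hs <;>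
      simp [copyGroup, groupIdx_eq hdisj (v := ⟨a, ha'⟩) ha, groupIdx_eq hdisj (v := ⟨b, hb'⟩) hb]
  | pull _ | span _ =>
    simp only [redLen] at he
    linarith

theorem RedWalk.copyGroup_eq (hdisj : Pairwise (Disjoint on g)) {h : ℝ} (hh : 0 < h)
    {x y : RedVert g} {L : List (RedEdge V)} (hw : RedWalk F r g T x y L)
    (hL : (L.map (redLen h)).sum ≤ 0) : copyGroup g x = copyGroup g y := by
  induction hw with
  | nil => rfl
  | @cons x z y e es _ hs _ ih =>
    simp only [List.map_cons, List.sum_cons] at hL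
    have := redLen_nonneg hh.le e
    have := sum_redLen_nonneg hh.le es
    exact (hs.copyGroup_eq hdisj hh (by linarith)).trans (ih (by linarith))

theorem RedWalk.exists_walk_to_group (hdisj : Pairwise (Disjoint on g)) {h : ℝ} (hh : 0 < h)
    {u : V} {v : {v // InGroup g v}} {L : List (RedEdge V)}
    (hw : RedWalk F r g T (.inl u) (.inr v) L) (hL : (L.map (redLen h)).sum ≤ h) :
    ∃ u' ∈ g (groupIdx g v), ∃ p : F.Walk u u', ∀ e ∈ p.edges, RedEdge.fe e ∈ T := by
  generalize hx : (Sum.inl u : RedVert g) = x at hw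
  generalize hy : (Sum.inr v : RedVert g) = y at hw
  induction hw generalizing u with
  | nil => cases hx.trans hy.symm
  | @cons x z y e es he hs hrest ih =>
    subst hx hy
    simp only [List.map_cons, List.sum_cons] at hL
    have := sum_redLen_nonneg hh.le es
    cases e with
    | fe _ =>
      obtain ⟨a, b, hadj, rfl, hua, rfl⟩ := hs
      cases Sum.inl.inj hua
      obtain ⟨u', hu', p, hp⟩ := ih (by simpa [redLen] using hL) rfl rfl
      exact ⟨u', hu', .cons hadj p, by simpa [he] using hp⟩
    | pull w =>
      obtain ⟨_, ⟨hxw, rfl⟩ | ⟨hxw, -⟩⟩ := hs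
      · cases Sum.inl.inj hxw
        have hgroup := hrest.copyGroup_eq hdisj hh (by simp only [redLen] at hL; linarith)
        simp only [copyGroup, Option.some.injEq] at hgroup
        exact ⟨u, hgroup ▸ mem_groupIdx _, .nil, by simp⟩
      · cases hxw
    | clique a b =>
      obtain ⟨-, -, -, -, ⟨⟨⟩, -⟩ | ⟨⟨⟩, -⟩⟩ := hs
    | span w =>
      have hgroup := hrest.copyGroup_eq hdisj hh (by simp only [redLen] at hL; linarith)
      obtain ⟨-, ⟨-, rfl⟩ | ⟨-, rfl⟩⟩ := hs <;> simp [copyGroup] at hgroup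

/-- `d x` is the length of a shortest walk from `x₀` to `x`. -/
theorem RedWalk.exists_parent_edges {x₀ : RedVert g} (hreach : ∀ x, ∃ L, RedWalk F r g T x₀ x L) :
    ∃ d : RedVert g → ℕ, ∀ x ≠ x₀, ∃ e ∈ T, ∃ z, RedStep F r g e z x ∧ d z < d x := by
  classical
  have hlen : ∀ x, ∃ n, ∃ L, RedWalk F r g T x₀ x L ∧ L.length = n := fun x =>
    let ⟨L, hL⟩ := hreach x
    ⟨L.length, L, hL, rfl⟩
  refine ⟨fun x => Nat.find (hlen x), fun x hx => ?_⟩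
  obtain ⟨L, hL, hlenL⟩ := Nat.find_spec (hlen x)
  obtain ⟨z, e, L', rfl, hL', he, hs⟩ :=
    hL.exists_eq_concat (by rintro rfl; exact hx hL.eq_of_nil.symm)
  refine ⟨e, he, z, hs, show Nat.find (hlen z) < Nat.find (hlen x) from ?_⟩
  have := Nat.find_min' (hlen z) ⟨L', hL', rfl⟩
  simp only [List.length_append, List.length_singleton] at hlenL
  omega

variable [DecidableEq V]

/-- The parent edges are pairwise distinct, so `n - 1` of them exhaust `T`. -/
theorem RedWalk.forall_mem_exists_redStep [Fintype V] {x₀ : RedVert g}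
    (hreach : ∀ x, ∃ L, RedWalk F r g T x₀ x L) (hcard : #T ≤ Fintype.card (RedVert g) - 1) :
    ∀ e ∈ T, ∃ x y, RedStep F r g e x y := by
  obtain ⟨d, hd⟩ := exists_parent_edges hreach
  choose p hpT z hz hdz using hd
  have hinj : ∀ x₁ x₂ (h₁ : x₁ ≠ x₀) (h₂ : x₂ ≠ x₀), p x₁ h₁ = p x₂ h₂ → x₁ = x₂ := by
    intro x₁ x₂ h₁ h₂ hp
    have hs₂ := hz x₂ h₂
    rw [← hp] at hs₂
    rcases (hz x₁ h₁).eq_or_swap hs₂ with ⟨-, h⟩ | ⟨h, h'⟩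
    · exact h.symm
    · have hd₂ := hdz x₂ h₂
      rw [h, h'] at hd₂
      exact absurd hd₂ (hdz x₁ h₁).asymm
  intro e he
  obtain ⟨x, hx, rfl⟩ := surj_on_of_inj_on_of_card_le (s := univ.erase x₀)
    (fun x hx => p x (ne_of_mem_erase hx)) (fun x hx => hpT _ _)
    (fun x₁ x₂ hx₁ hx₂ => hinj x₁ x₂ _ _)
    (by rwa [card_erase_of_mem (mem_univ _), card_univ]) e he
  exact ⟨_, _, hz x _⟩

noncomputable def copyEdge (g : Fin k → Finset V) (rep : Fin k → V) (w : {v // InGroup g v}) :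
    RedEdge V :=
  if w.1 = rep (groupIdx g w) then .pull w.1 else .clique (rep (groupIdx g w)) w.1

theorem copyEdge_injective (rep : Fin k → V) : Injective (copyEdge g rep) := by
  intro w w' h
  unfold copyEdge at h
  split_ifs at h <;> simp_all [Subtype.ext_iff]

noncomputable def liftEdge (g : Fin k → Finset V) (rep : Fin k → V) :
    Sym2 V ⊕ V ⊕ {v // InGroup g v} ↪ RedEdge V where
  toFun := Sum.elim .fe (Sum.elim .span (copyEdge g rep))
  inj' := by
    refine Injective.sumElim (fun _ _ => RedEdge.fe.inj)
      (Injective.sumElim (fun _ _ => RedEdge.span.inj) (copyEdge_injective rep) ?_) ?_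
    · intro v w
      unfold copyEdge
      split_ifs <;> simp
    · rintro e (v | w)
      · simp
      · simp only [Sum.elim_inr, copyEdge]
        split_ifs <;> simp

variable [Fintype V]

/-- `D` holds one root of each component of `S` other than that of `r`, and `rep i` represents
group `i`. -/
noncomputable def steinerLift (g : Fin k → Finset V) (S : Finset (Sym2 V)) (D : Finset V)
    (rep : Fin k → V) : Finset (RedEdge V) :=
  (S.disjSum (D.disjSum univ)).map (liftEdge g rep)

theorem card_steinerLift (S : Finset (Sym2 V)) (D : Finset V) (rep : Fin k → V) :
    #(steinerLift g S D rep) = #S + (#D + Fintype.card {v // InGroup g v}) := by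
  rw [steinerLift, card_map, card_disjSum, card_disjSum, card_univ]

theorem sum_redWt_steinerLift (wF : Sym2 V → ℝ) (S : Finset (Sym2 V)) (D : Finset V)
    (rep : Fin k → V) : ∑ e ∈ steinerLift g S D rep, redWt wF e = ∑ e ∈ S, wF e := by
  have hcopy : ∀ w, redWt wF (copyEdge g rep w) = 0 := fun w => by
    unfold copyEdge
    split_ifs <;> rfl
  simp [steinerLift, sum_disjSum, liftEdge, hcopy, redWt.eq_1, redWt.eq_4]

theorem fe_mem_steinerLift {S : Finset (Sym2 V)} {D : Finset V} {rep : Fin k → V} {e : Sym2 V}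
    (he : e ∈ S) : RedEdge.fe e ∈ steinerLift g S D rep :=
  mem_map_of_mem (liftEdge g rep) (inl_mem_disjSum.mpr he)

theorem span_mem_steinerLift {S : Finset (Sym2 V)} {D : Finset V} {rep : Fin k → V} {w : V}
    (hw : w ∈ D) : RedEdge.span w ∈ steinerLift g S D rep :=
  mem_map_of_mem (liftEdge g rep) (inr_mem_disjSum.mpr (inl_mem_disjSum.mpr hw))

theorem copyEdge_mem_steinerLift (S : Finset (Sym2 V)) (D : Finset V) {rep : Fin k → V}
    (w : {v // InGroup g v}) : copyEdge g rep w ∈ steinerLift g S D rep :=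
  mem_map_of_mem (liftEdge g rep) (inr_mem_disjSum.mpr (inr_mem_disjSum.mpr (mem_univ w)))

theorem exists_walk_inl_steinerLift {h : ℝ} (hh : 0 ≤ h) {S : Finset (Sym2 V)}
    (hSF : ↑S ⊆ F.edgeSet) {D : Finset V}
    (hcover : ∀ v, ∃ w ∈ insert r D, (fromEdgeSet (S : Set (Sym2 V))).Reachable w v)
    (rep : Fin k → V) (u : V) :
    ∃ L, RedWalk F r g (steinerLift g S D rep) (.inl r) (.inl u) L ∧
      (L.map (redLen h)).sum ≤ h := by
  obtain ⟨w, hw, ⟨p⟩⟩ := hcover u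
  have hSle : fromEdgeSet (S : Set (Sym2 V)) ≤ F := fun a b hab =>
    hSF ((fromEdgeSet_adj _).mp hab).1
  have hp := RedWalk.ofWalk (r := r) (g := g) (T := steinerLift g S D rep) hSle p fun e he =>
    fe_mem_steinerLift (p.mem_of_mem_edges_fromEdgeSet he)
  by_cases hwr : w = r
  · subst hwr
    exact ⟨_, hp, by simp [hh]⟩
  · exact ⟨.span w :: _, .cons (span_mem_steinerLift (mem_of_mem_insert_of_ne hw hwr))
      ⟨hwr, .inl ⟨rfl, rfl⟩⟩ hp, by simp [redLen]⟩

theorem exists_walk_inr_steinerLift (hdisj : Pairwise (Disjoint on g)) (S : Finset (Sym2 V))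
    (D : Finset V) {rep : Fin k → V} (hrep : ∀ i, rep i ∈ g i)
    (hrepw : ∀ i, ∃ p : F.Walk r (rep i), ∀ e ∈ p.edges, e ∈ S) {h : ℝ}
    (u : {v // InGroup g v}) :
    ∃ L, RedWalk F r g (steinerLift g S D rep) (.inl r) (.inr u) L ∧
      (L.map (redLen h)).sum ≤ h := by
  set i := groupIdx g u
  obtain ⟨p, hp⟩ := hrepw i
  have hwalk := RedWalk.ofWalk (r := r) (g := g) (T := steinerLift g S D rep) le_rfl p fun e he =>
    fe_mem_steinerLift (hp e he)
  have hrepIn : InGroup g (rep i) := ⟨i, hrep i⟩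
  have hpull : copyEdge g rep ⟨rep i, hrepIn⟩ = .pull (rep i) := by
    simp [copyEdge, groupIdx_eq hdisj (v := ⟨rep i, hrepIn⟩) (hrep i)]
  have hpullStep : RedStep F r g (.pull (rep i)) (.inl (rep i)) (.inr ⟨rep i, hrepIn⟩) :=
    ⟨hrepIn, .inl ⟨rfl, rfl⟩⟩
  have hpullWalk := hwalk.append
    (.cons (hpull ▸ copyEdge_mem_steinerLift S D _) hpullStep (.nil _))
  by_cases hur : u.1 = rep i
  · rw [show u = ⟨rep i, hrepIn⟩ from Subtype.ext hur]
    exact ⟨_, hpullWalk, by simp [redLen]⟩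
  · have hclique : copyEdge g rep u = .clique (rep i) u.1 := by simp [copyEdge, i, hur]
    have hcliqueStep : RedStep F r g (.clique (rep i) u.1) (.inr ⟨rep i, hrepIn⟩) (.inr u) :=
      ⟨Ne.symm hur, ⟨i, hrep i, mem_groupIdx u⟩, hrepIn, u.2, .inl ⟨rfl, rfl⟩⟩
    refine ⟨_, hpullWalk.append
      (.cons (hclique ▸ copyEdge_mem_steinerLift S D u) hcliqueStep (.nil _)), ?_⟩
    simp [redLen]

theorem exists_steiner_of_feasible (hdisj : Pairwise (Disjoint on g))
    (hne : ∀ i, (g i).Nonempty) {h : ℝ} (hh : 0 < h) (wF : Sym2 V → ℝ)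
    (hcard : #T ≤ Fintype.card (RedVert g) - 1)
    (hreach : ∀ x : RedVert g, ∃ L, RedWalk F r g T (.inl r) x L ∧ (L.map (redLen h)).sum ≤ h) :
    ∃ S : Finset (Sym2 V), ↑S ⊆ F.edgeSet ∧
      (∀ i, ∃ v ∈ g i, ∃ p : F.Walk r v, ∀ e ∈ p.edges, e ∈ S) ∧
      ∑ e ∈ S, wF e = ∑ e ∈ T, redWt wF e := by
  have hstep := RedWalk.forall_mem_exists_redStep (fun x => (hreach x).imp fun _ => And.left) hcard
  refine ⟨T.preimage RedEdge.fe (fun _ _ _ _ => RedEdge.fe.inj), fun e he => ?_, fun i => ?_, ?_⟩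
  · obtain ⟨_, _, u, v, hadj, rfl, -, -⟩ := hstep _ (mem_preimage.mp he)
    exact hadj
  · obtain ⟨v, hv⟩ := hne i
    obtain ⟨L, hL, hLh⟩ := hreach (.inr ⟨v, i, hv⟩)
    obtain ⟨u, hu, p, hp⟩ := hL.exists_walk_to_group hdisj hh hLh
    rw [groupIdx_eq hdisj hv] at hu
    exact ⟨u, hu, p, fun e he => mem_preimage.mpr (hp e he)⟩
  · refine sum_preimage _ _ _ (redWt wF) fun e _ he => ?_
    cases e with
    | fe e => exact absurd ⟨e, rfl⟩ he
    | _ => rfl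

theorem exists_feasible_of_steiner (hdisj : Pairwise (Disjoint on g)) {h : ℝ} (hh : 0 ≤ h)
    (wF : Sym2 V → ℝ) (S : Finset (Sym2 V)) (hSF : ↑S ⊆ F.edgeSet)
    (hac : (fromEdgeSet (S : Set (Sym2 V))).IsAcyclic)
    (hgroups : ∀ i, ∃ v ∈ g i, ∃ p : F.Walk r v, ∀ e ∈ p.edges, e ∈ S) :
    ∃ T : Finset (RedEdge V), #T = Fintype.card (RedVert g) - 1 ∧
      (∀ x : RedVert g, ∃ L, RedWalk F r g T (.inl r) x L ∧ (L.map (redLen h)).sum ≤ h) ∧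
      ∑ e ∈ T, redWt wF e = ∑ e ∈ S, wF e := by
  choose rep hrep hrepw using hgroups
  obtain ⟨R, hrR, hcard, hcover⟩ :=
    exists_roots_of_isAcyclic r S (fun e he => F.not_isDiag_of_mem_edgeSet (hSF he)) hac
  refine ⟨steinerLift g S (R.erase r) rep, ?_, ?_, sum_redWt_steinerLift wF S _ rep⟩
  · rw [card_steinerLift, card_erase_of_mem hrR, Fintype.card_sum]
    have := card_pos.mpr ⟨r, hrR⟩
    omega
  · rintro (u | u)
    · exact exists_walk_inl_steinerLift hh hSF (by rwa [insert_erase hrR]) rep u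
    · exact exists_walk_inr_steinerLift hdisj S _ hrep hrepw u

end Reduction

theorem stmt10_general {V : Type*} [Fintype V] [DecidableEq V] {k : ℕ}
    (F : SimpleGraph V) (r : V) (wF : Sym2 V → ℝ)
    (g : Fin k → Finset V)
    (hdisj : ∀ i j, i ≠ j → Disjoint (g i) (g j))
    (hne : ∀ i, (g i).Nonempty)
    (h : ℝ) (hh : 0 < h) :
    (∀ T : Finset (RedEdge V),
      T.card = Fintype.card (RedVert g) - 1 →
      (∀ x : RedVert g, ∃ L, RedWalk F r g T (Sum.inl r) x L ∧
        (L.map (redLen h)).sum ≤ h) →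
      ∃ S : Finset (Sym2 V), ↑S ⊆ F.edgeSet ∧
        (∀ i, ∃ v ∈ g i, ∃ p : F.Walk r v, ∀ e ∈ p.edges, e ∈ S) ∧
        ∑ e ∈ S, wF e = ∑ e ∈ T, redWt wF e)
    ∧
    (∀ S : Finset (Sym2 V), ↑S ⊆ F.edgeSet →
      (SimpleGraph.fromEdgeSet (↑S : Set (Sym2 V))).IsAcyclic →
      (∀ i, ∃ v ∈ g i, ∃ p : F.Walk r v, ∀ e ∈ p.edges, e ∈ S) →
      ∃ T : Finset (RedEdge V),
        T.card = Fintype.card (RedVert g) - 1 ∧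
        (∀ x : RedVert g, ∃ L, RedWalk F r g T (Sum.inl r) x L ∧
          (L.map (redLen h)).sum ≤ h) ∧
        ∑ e ∈ T, redWt wF e = ∑ e ∈ S, wF e) :=
  have hdisj' : Pairwise (Disjoint on g) := fun i j => hdisj i j
  ⟨fun _ hcard hreach => exists_steiner_of_feasible hdisj' hne hh wF hcard.le hreach,
    fun S hSF hac hgroups => exists_feasible_of_steiner hdisj' hh.le wF S hSF hac hgroups⟩

/-- Exactness of the group Steiner tree → length-constrained MST reduction.
Forward: any spanning tree of the constructed graph `G` (a set of `|V(G)| - 1` edges from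
which every vertex is reachable from the root within length `h`) yields a subgraph of `F`
connecting `r` to at least one vertex of every group, of the same weight. Converse: every
(acyclic) group Steiner solution in `F` extends to a feasible `h`-length spanning tree of
the constructed graph of the same weight. -/
theorem stmt10 {V : Type*} [Fintype V] [DecidableEq V] {k : ℕ}
    (F : SimpleGraph V) (r : V) (wF : Sym2 V → ℝ) (hwF : ∀ e, 0 ≤ wF e)
    (g : Fin k → Finset V)
    (hdisj : ∀ i j, i ≠ j → Disjoint (g i) (g j))
    (hne : ∀ i, (g i).Nonempty)
    (h : ℝ) (hh : 0 < h) :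
    (∀ T : Finset (RedEdge V),
      T.card = Fintype.card (RedVert g) - 1 →
      (∀ x : RedVert g, ∃ L, RedWalk F r g T (Sum.inl r) x L ∧
        (L.map (redLen h)).sum ≤ h) →
      ∃ S : Finset (Sym2 V), ↑S ⊆ F.edgeSet ∧
        (∀ i, ∃ v ∈ g i, ∃ p : F.Walk r v, ∀ e ∈ p.edges, e ∈ S) ∧
        ∑ e ∈ S, wF e = ∑ e ∈ T, redWt wF e)
    ∧
    (∀ S : Finset (Sym2 V), ↑S ⊆ F.edgeSet →
      (SimpleGraph.fromEdgeSet (↑S : Set (Sym2 V))).IsAcyclic →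
      (∀ i, ∃ v ∈ g i, ∃ p : F.Walk r v, ∀ e ∈ p.edges, e ∈ S) →
      ∃ T : Finset (RedEdge V),
        T.card = Fintype.card (RedVert g) - 1 ∧
        (∀ x : RedVert g, ∃ L, RedWalk F r g T (Sum.inl r) x L ∧
          (L.map (redLen h)).sum ≤ h) ∧
        ∑ e ∈ T, redWt wF e = ∑ e ∈ S, wF e) :=
  stmt10_general F r wF g hdisj hne h hh
end
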